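/- (Borel subgradient selection) Let X be a Polish space and g : X × ℝ^n → ℝ lower semi-analytic. Assume that for every x ∈ X: the section y ↦ g(x,y) is convex, g(x,0) = 0, and the subdifferential ∂_y g(x,0) at the origin is nonempty. Then there exists a Borel measurable map p : X → ℝ^n with p(x) ∈ ∂_y g(x,0) for every x ∈ X, i.e. g(x,y) ≥ p(x)·y for all x ∈ X and y ∈ ℝ^n. -/

import Mathlib

/-!
Induct on `n`, fixing one coordinate at a time. Along the first axis, convexity puts every left
secant slope `g(x, t e₁) / t`, `t < 0`, below every right one, so for each rational `q` the analytic
sets `{x | some right slope is < q}` and `{x | some left slope is > q}` are disjoint. Lusin's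
separation theorem puts a Borel set `B q` between them, and `c x = sup {q | x ∈ B q}` is a Borel
slope of `t ↦ g(x, t e₁)` at `0`. By Hahn–Banach (with the sublinear directional derivative at `0`
as the dominating function) `c x` is the first coordinate of a subgradient, so the partial infimum
`y' ↦ inf_t (g(x, (t, y')) - c x * t)` is a real-valued convex function of the remaining
coordinates, again lower semi-analytic and vanishing at `0`. A Borel subgradient `p'` of it gives
the Borel subgradient `(c, p')` of `g`.
-/

open MeasureTheory Set

theorem MeasureTheory.AnalyticSet.inter {α : Type*} [TopologicalSpace α] [T2Space α]
    {s t : Set α} (hs : AnalyticSet s) (ht : AnalyticSet t) : AnalyticSet (s ∩ t) := by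
  rw [inter_eq_iInter]
  exact AnalyticSet.iInter fun b => by cases b <;> assumption

def LowerSemiAnalytic {Z : Type*} [TopologicalSpace Z] (f : Z → ℝ) : Prop :=
  ∀ γ : ℝ, AnalyticSet {z | f z < γ}

namespace LowerSemiAnalytic

variable {Z : Type*} [TopologicalSpace Z]

theorem comp_continuous [PolishSpace Z] {W : Type*} [TopologicalSpace W] [T2Space W]
    {f : W → ℝ} (hf : LowerSemiAnalytic f) {u : Z → W} (hu : Continuous u) :
    LowerSemiAnalytic (f ∘ u) :=
  fun γ => (hf γ).preimage hu

theorem sub_measurable [PolishSpace Z] [MeasurableSpace Z] [BorelSpace Z] {f u : Z → ℝ}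
    (hf : LowerSemiAnalytic f) (hu : Measurable u) : LowerSemiAnalytic (f - u) := by
  intro γ
  have hunion :
      {z | (f - u) z < γ} = ⋃ r : ℚ, {z | f z < r} ∩ {z | (r : ℝ) < γ + u z} := by
    ext z
    simp only [Pi.sub_apply, mem_ofPred_eq, mem_iUnion, mem_inter_iff, sub_lt_iff_lt_add]
    exact ⟨fun h => exists_rat_btwn h, fun ⟨r, h₁, h₂⟩ => h₁.trans h₂⟩
  rw [hunion]
  exact .iUnion fun r => (hf r).inter
    (measurableSet_lt measurable_const (hu.const_add γ)).analyticSet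

theorem ciInf_of_continuous {f : ℝ → Z → ℝ} (hf : ∀ t, LowerSemiAnalytic (f t))
    (hcont : ∀ z, Continuous fun t => f t z) (hbdd : ∀ z, BddBelow (range fun t => f t z)) :
    LowerSemiAnalytic fun z => ⨅ t, f t z := by
  intro γ
  have hunion : {z | ⨅ t, f t z < γ} = ⋃ q : ℚ, {z | f q z < γ} := by
    ext z
    simp only [mem_ofPred_eq, mem_iUnion]
    constructor
    · intro h
      obtain ⟨t, ht⟩ : ∃ t, f t z < γ := exists_lt_of_ciInf_lt h
      obtain ⟨q, hq⟩ := Rat.denseRange_cast.exists_mem_open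
        (isOpen_lt (hcont z) continuous_const) ⟨t, ht⟩
      exact ⟨q, hq⟩
    · rintro ⟨q, hq⟩
      exact (ciInf_le (hbdd z) (q : ℝ)).trans_lt hq
  rw [hunion]
  exact .iUnion fun q => hf q γ

end LowerSemiAnalytic

section Slope

variable {φ : ℝ → ℝ}

theorem ConvexOn.secant_zero_mono (hφ : ConvexOn ℝ univ φ) (h0 : φ 0 = 0) {s t : ℝ}
    (hs : s ≠ 0) (ht : t ≠ 0) (hst : s ≤ t) : φ s / s ≤ φ t / t := by
  simpa [h0] using hφ.secant_mono (mem_univ 0) (mem_univ s) (mem_univ t) hs ht hst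

theorem ConvexOn.mul_le_of_forall_rat_slope (hφ : ConvexOn ℝ univ φ) (h0 : φ 0 = 0) {c : ℝ}
    (hpos : ∀ r : ℚ, 0 < r → c * r ≤ φ r) (hneg : ∀ r : ℚ, r < 0 → c * r ≤ φ r) (t : ℝ) :
    c * t ≤ φ t := by
  rcases lt_trichotomy t 0 with ht | rfl | ht
  · obtain ⟨r, htr, hr⟩ := exists_rat_btwn ht
    have hr' : (r : ℝ) < 0 := hr
    have hslope := hφ.secant_zero_mono h0 ht.ne hr'.ne htr.le
    have hc : φ r / r ≤ c := (div_le_iff_of_neg hr').2 (hneg r (by exact_mod_cast hr))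
    exact (div_le_iff_of_neg ht).1 (hslope.trans hc)
  · simp [h0]
  · obtain ⟨r, hr, hrt⟩ := exists_rat_btwn ht
    have hr' : (0 : ℝ) < r := hr
    have hslope := hφ.secant_zero_mono h0 hr'.ne' ht.ne' hrt.le
    have hc : c ≤ φ r / r := (le_div_iff₀ hr').2 (hpos r (by exact_mod_cast hr))
    exact (le_div_iff₀ ht).1 (hc.trans hslope)

end Slope

theorem measurable_sSup_rat {X : Type*} [MeasurableSpace X] {B : ℚ → Set X}
    (hB : ∀ q, MeasurableSet (B q)) (hne : ∀ x, ∃ q, x ∈ B q)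
    (hbdd : ∀ x, BddAbove (((↑) : ℚ → ℝ) '' {q | x ∈ B q})) :
    Measurable fun x => sSup (((↑) : ℚ → ℝ) '' {q | x ∈ B q}) := by
  refine measurable_of_Ioi fun a => ?_
  have hunion : (fun x => sSup (((↑) : ℚ → ℝ) '' {q | x ∈ B q})) ⁻¹' Ioi a
      = ⋃ q : ℚ, ⋃ (_ : a < q), B q := by
    ext x
    obtain ⟨q₀, hq₀⟩ := hne x
    simp [lt_csSup_iff (hbdd x) ⟨_, ⟨q₀, hq₀, rfl⟩⟩, and_comm]
  rw [hunion]
  exact .iUnion fun q => .iUnion fun _ => hB q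

section SlopeSelection

variable {X : Type*} [TopologicalSpace X] [T2Space X] [MeasurableSpace X]
  [OpensMeasurableSpace X] {φ : X → ℝ → ℝ}

theorem exists_measurableSet_separating_slopes (hφ : ∀ t, LowerSemiAnalytic fun x => φ x t)
    (hconv : ∀ x, ConvexOn ℝ univ (φ x)) (hzero : ∀ x, φ x 0 = 0) :
    ∃ B : ℚ → Set X, (∀ q, MeasurableSet (B q)) ∧
      (∀ x (q : ℚ), x ∈ B q → ∀ r : ℚ, 0 < r → (q : ℝ) * r ≤ φ x r) ∧
      (∀ x (q : ℚ), ∀ r : ℚ, r < 0 → φ x r < q * r → x ∈ B q) := by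
  -- `x ∈ S q` (resp. `T q`) iff some right (resp. left) secant slope of `φ x` at `0` is `< q`
  -- (resp. `> q`).
  set S : ℚ → Set X := fun q => ⋃ r : {r : ℚ // 0 < r}, {x | φ x r < q * r}
  set T : ℚ → Set X := fun q => ⋃ r : {r : ℚ // r < 0}, {x | φ x r < q * r}
  have hdisj : ∀ q, Disjoint (T q) (S q) := by
    refine fun q => disjoint_left.2 fun x hT hS => ?_
    simp only [S, T, mem_iUnion, mem_ofPred_eq] at hT hS
    obtain ⟨⟨s, hs⟩, hφs⟩ := hT
    obtain ⟨⟨r, hr⟩, hφr⟩ := hS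
    have hs' : (s : ℝ) < 0 := by exact_mod_cast hs
    have hr' : (0 : ℝ) < r := by exact_mod_cast hr
    have hslope := (hconv x).secant_zero_mono (hzero x) hs'.ne hr'.ne' (hs'.trans hr').le
    have h₁ : (q : ℝ) < φ x s / s := (lt_div_iff_of_neg hs').2 hφs
    have h₂ : φ x r / r < q := (div_lt_iff₀ hr').2 hφr
    linarith
  have hsep : ∀ q, MeasurablySeparable (T q) (S q) := fun q =>
    AnalyticSet.measurablySeparable (.iUnion fun r => hφ r _)
      (.iUnion fun r => hφ r _) (hdisj q)
  choose B hTB hSB hB using hsep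
  refine ⟨B, hB, fun x q hx r hr => ?_, fun x q r hr hφr => hTB q ?_⟩
  · refine not_lt.1 fun hφr => disjoint_left.1 (hSB q) ?_ hx
    exact mem_iUnion.2 ⟨⟨r, hr⟩, hφr⟩
  · exact mem_iUnion.2 ⟨⟨r, hr⟩, hφr⟩

theorem exists_measurable_mul_le_of_convexOn (hφ : ∀ t, LowerSemiAnalytic fun x => φ x t)
    (hconv : ∀ x, ConvexOn ℝ univ (φ x)) (hzero : ∀ x, φ x 0 = 0) :
    ∃ c : X → ℝ, Measurable c ∧ ∀ x t, c x * t ≤ φ x t := by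
  obtain ⟨B, hB, hBS, hTB⟩ := exists_measurableSet_separating_slopes hφ hconv hzero
  set D : X → Set ℝ := fun x => ((↑) : ℚ → ℝ) '' {q | x ∈ B q}
  have hne : ∀ x, ∃ q, x ∈ B q := fun x => by
    obtain ⟨q, hq⟩ := exists_rat_lt (-φ x (-1))
    exact ⟨q, hTB x q (-1) (by norm_num) (by push_cast; linarith)⟩
  have hbdd : ∀ x, BddAbove (D x) := fun x =>
    ⟨φ x 1, by rintro _ ⟨q, hq, rfl⟩; simpa using hBS x q hq 1 one_pos⟩
  refine ⟨fun x => sSup (D x), measurable_sSup_rat hB hne hbdd, fun x => ?_⟩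
  have hDne : (D x).Nonempty := let ⟨q, hq⟩ := hne x; ⟨q, q, hq, rfl⟩
  refine (hconv x).mul_le_of_forall_rat_slope (hzero x) (fun r hr => ?_) (fun r hr => ?_)
  · have hr' : (0 : ℝ) < r := by exact_mod_cast hr
    rw [← le_div_iff₀ hr']
    refine csSup_le hDne ?_
    rintro _ ⟨q, hq, rfl⟩
    exact (le_div_iff₀ hr').2 (hBS x q hq r hr)
  · have hr' : (r : ℝ) < 0 := by exact_mod_cast hr
    rw [← div_le_iff_of_neg hr']
    refine not_lt.1 fun hlt => ?_
    obtain ⟨q, hcq, hq⟩ := exists_rat_btwn hlt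
    have hmem : x ∈ B q := hTB x q r hr ((lt_div_iff_of_neg hr').1 hq)
    exact (le_csSup (hbdd x) ⟨q, hmem, rfl⟩).not_gt hcq

end SlopeSelection

section DirDeriv

variable {E : Type*} [AddCommGroup E] [Module ℝ E] {f : E → ℝ}

noncomputable def dirDerivZero (f : E → ℝ) (y : E) : ℝ :=
  ⨅ t : Ioi (0 : ℝ), f ((t : ℝ) • y) / t

theorem le_dirDerivZero {y : E} {c : ℝ} (hc : ∀ t, 0 < t → c * t ≤ f (t • y)) :
    c ≤ dirDerivZero f y :=
  le_ciInf fun t => (le_div_iff₀ t.2).2 (hc t t.2)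

theorem dirDerivZero_smul {a : ℝ} (ha : 0 < a) (y : E) :
    dirDerivZero f (a • y) = a * dirDerivZero f y := by
  have hsurj :
      Function.Surjective fun t : Ioi (0 : ℝ) => (⟨t / a, div_pos t.2 ha⟩ : Ioi (0 : ℝ)) :=
    fun s => ⟨⟨s * a, mul_pos s.2 ha⟩, Subtype.ext (mul_div_cancel_right₀ _ ha.ne')⟩
  rw [dirDerivZero, dirDerivZero, Real.mul_iInf_of_nonneg ha.le, ← hsurj.iInf_comp]
  congr 1
  ext t
  rw [smul_smul, div_mul_cancel₀ _ ha.ne']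
  field_simp

namespace ConvexOn

theorem neg_map_neg_le_div (hf : ConvexOn ℝ univ f) (h0 : f 0 = 0) (y : E) {t : ℝ}
    (ht : 0 < t) : -f (-y) ≤ f (t • y) / t := by
  have hline : ConvexOn ℝ univ fun s : ℝ => f (s • y) :=
    (hf.comp_linearMap (LinearMap.toSpanSingleton ℝ E y)).subset (subset_univ _) convex_univ
  simpa [div_neg] using hline.secant_zero_mono (by simpa using h0)
    (by norm_num : (-1 : ℝ) ≠ 0) ht.ne' (by linarith)

theorem bddBelow_slopes (hf : ConvexOn ℝ univ f) (h0 : f 0 = 0) (y : E) :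
    BddBelow (range fun t : Ioi (0 : ℝ) => f ((t : ℝ) • y) / t) :=
  ⟨-f (-y), by rintro _ ⟨t, rfl⟩; exact hf.neg_map_neg_le_div h0 y t.2⟩

theorem dirDerivZero_le (hf : ConvexOn ℝ univ f) (h0 : f 0 = 0) (y : E) :
    dirDerivZero f y ≤ f y :=
  calc dirDerivZero f y ≤ f ((1 : ℝ) • y) / 1 :=
        ciInf_le (hf.bddBelow_slopes h0 y) ⟨1, by norm_num⟩
    _ = f y := by simp

theorem dirDerivZero_add_le_div_add_div (hf : ConvexOn ℝ univ f) (h0 : f 0 = 0) (x y : E)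
    {s t : ℝ} (hs : 0 < s) (ht : 0 < t) :
    dirDerivZero f (x + y) ≤ f (s • x) / s + f (t • y) / t := by
  have hst : 0 < s + t := add_pos hs ht
  set u := s * t / (s + t)
  have hu : 0 < u := by positivity
  have hcomb : u • (x + y) = (t / (s + t)) • (s • x) + (s / (s + t)) • (t • y) := by
    simp only [u, smul_add, smul_smul]
    congr 2 <;> ring
  have hconv := hf.2 (mem_univ (s • x)) (mem_univ (t • y)) (div_pos ht hst).le
    (div_pos hs hst).le (by rw [← add_div, add_comm, div_self hst.ne'])
  rw [← hcomb, smul_eq_mul, smul_eq_mul] at hconv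
  calc dirDerivZero f (x + y) ≤ f (u • (x + y)) / u :=
        ciInf_le (hf.bddBelow_slopes h0 _) ⟨u, hu⟩
    _ ≤ (t / (s + t) * f (s • x) + s / (s + t) * f (t • y)) / u := by gcongr
    _ = f (s • x) / s + f (t • y) / t := by simp only [u]; field_simp

theorem dirDerivZero_add_le (hf : ConvexOn ℝ univ f) (h0 : f 0 = 0) (x y : E) :
    dirDerivZero f (x + y) ≤ dirDerivZero f x + dirDerivZero f y := by
  have hx : ∀ t : Ioi (0 : ℝ), dirDerivZero f (x + y) - f ((t : ℝ) • y) / t ≤ dirDerivZero f x :=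
    fun t => le_ciInf fun s => by
      linarith [hf.dirDerivZero_add_le_div_add_div h0 x y s.2 t.2]
  have hy : dirDerivZero f (x + y) - dirDerivZero f x ≤ dirDerivZero f y :=
    le_ciInf fun t => by linarith [hx t]
  linarith

theorem exists_extension_of_le (hf : ConvexOn ℝ univ f) (h0 : f 0 = 0) (φ : E →ₗ.[ℝ] ℝ)
    (hφ : ∀ v : φ.domain, φ v ≤ f v) :
    ∃ G : E →ₗ[ℝ] ℝ, (∀ v : φ.domain, G v = φ v) ∧ ∀ y, G y ≤ f y := by
  have hφN : ∀ v : φ.domain, φ v ≤ dirDerivZero f v := fun v =>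
    le_dirDerivZero fun t _ => by simpa [LinearPMap.map_smul, mul_comm] using hφ (t • v)
  obtain ⟨G, hGφ, hGN⟩ := exists_extension_of_le_sublinear φ (dirDerivZero f)
    (fun a ha y => dirDerivZero_smul ha y) (hf.dirDerivZero_add_le h0) hφN
  exact ⟨G, hGφ, fun y => (hGN y).trans (hf.dirDerivZero_le h0 y)⟩

theorem exists_linearMap_le_of_mul_le (hf : ConvexOn ℝ univ f) (h0 : f 0 = 0) {e : E}
    (he : e ≠ 0) {c : ℝ} (hc : ∀ t, c * t ≤ f (t • e)) :
    ∃ G : E →ₗ[ℝ] ℝ, G e = c ∧ ∀ y, G y ≤ f y := by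
  set φ : E →ₗ.[ℝ] ℝ := LinearPMap.mkSpanSingleton e c he
  have hφ : ∀ v : φ.domain, φ v ≤ f v := by
    rintro ⟨v, hv⟩
    obtain ⟨t, rfl⟩ := Submodule.mem_span_singleton.1 hv
    have happ : φ ⟨t • e, hv⟩ = t * c := LinearPMap.mkSpanSingleton'_apply _ _ _ t _
    simpa [happ, mul_comm] using hc t
  obtain ⟨G, hGφ, hG⟩ := hf.exists_extension_of_le h0 φ hφ
  exact ⟨G, (hGφ ⟨e, _⟩).trans (LinearPMap.mkSpanSingleton_apply ℝ ℝ he c), hG⟩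

end ConvexOn

end DirDeriv

theorem ConvexOn.ciInf_prod {E F : Type*} [AddCommGroup E] [Module ℝ E] [AddCommGroup F]
    [Module ℝ F] {h : E × F → ℝ} (hh : ConvexOn ℝ univ h)
    (hbdd : ∀ y, BddBelow (range fun x => h (x, y))) :
    ConvexOn ℝ univ fun y => ⨅ x, h (x, y) := by
  refine ⟨convex_univ, fun y₁ _ y₂ _ a b ha hb hab => le_of_forall_pos_le_add fun ε hε => ?_⟩
  obtain ⟨x₁, hx₁⟩ : ∃ x, h (x, y₁) < (⨅ x, h (x, y₁)) + ε :=
    exists_lt_of_ciInf_lt (lt_add_of_pos_right _ hε)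
  obtain ⟨x₂, hx₂⟩ : ∃ x, h (x, y₂) < (⨅ x, h (x, y₂)) + ε :=
    exists_lt_of_ciInf_lt (lt_add_of_pos_right _ hε)
  calc ⨅ x, h (x, a • y₁ + b • y₂) ≤ h (a • x₁ + b • x₂, a • y₁ + b • y₂) :=
        ciInf_le (hbdd _) _
    _ ≤ a * h (x₁, y₁) + b * h (x₂, y₂) := by
      simpa using hh.2 (mem_univ (x₁, y₁)) (mem_univ (x₂, y₂)) ha hb hab
    _ ≤ a * ((⨅ x, h (x, y₁)) + ε) + b * ((⨅ x, h (x, y₂)) + ε) := by gcongr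
    _ = a • (⨅ x, h (x, y₁)) + b • (⨅ x, h (x, y₂)) + ε := by
      simp only [smul_eq_mul]; linear_combination ε * hab

theorem ConvexOn.comp_finCons {n : ℕ} {f : (Fin (n + 1) → ℝ) → ℝ} (hf : ConvexOn ℝ univ f) :
    ConvexOn ℝ univ fun p : ℝ × (Fin n → ℝ) => f (Fin.cons p.1 p.2) :=
  (hf.comp_linearMap (Fin.consLinearEquiv ℝ fun _ : Fin (n + 1) => ℝ).toLinearMap).subset
    (subset_univ _) convex_univ

section TiltedMarginal

variable {n : ℕ}

noncomputable def tiltedMarginal (f : (Fin (n + 1) → ℝ) → ℝ) (c : ℝ) (y : Fin n → ℝ) : ℝ :=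
  ⨅ t : ℝ, (f (Fin.cons t y) - c * t)

namespace ConvexOn

variable {f : (Fin (n + 1) → ℝ) → ℝ} {c : ℝ}

theorem bddBelow_range_tilted (hf : ConvexOn ℝ univ f) (h0 : f 0 = 0)
    (hc : ∀ t, c * t ≤ f (Fin.cons t 0)) (y : Fin n → ℝ) :
    BddBelow (range fun t : ℝ => f (Fin.cons t y) - c * t) := by
  have hsmul : ∀ t : ℝ, t • (Fin.cons 1 0 : Fin (n + 1) → ℝ) = Fin.cons t 0 := fun t => by
    ext i; cases i using Fin.cases <;> simp
  have hcons : ∀ t : ℝ, (Fin.cons t y : Fin (n + 1) → ℝ) = Fin.cons 0 y + t • Fin.cons 1 0 :=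
    fun t => by ext i; cases i using Fin.cases <;> simp
  obtain ⟨G, hGe, hG⟩ := hf.exists_linearMap_le_of_mul_le h0 (e := Fin.cons 1 0)
    (fun h => by simpa using congr_fun h 0) (c := c) (fun t => by simpa [hsmul] using hc t)
  refine ⟨G (Fin.cons 0 y), ?_⟩
  rintro _ ⟨t, rfl⟩
  have hGt : G (Fin.cons t y) = G (Fin.cons 0 y) + c * t := by
    rw [hcons, map_add, map_smul, hGe, smul_eq_mul, mul_comm]
  linarith [hG (Fin.cons t y)]

theorem tiltedMarginal_zero (hf : ConvexOn ℝ univ f) (h0 : f 0 = 0)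
    (hc : ∀ t, c * t ≤ f (Fin.cons t 0)) : tiltedMarginal f c 0 = 0 := by
  have hcons : (Fin.cons 0 0 : Fin (n + 1) → ℝ) = 0 := Matrix.cons_zero_zero
  exact le_antisymm
    ((ciInf_le (hf.bddBelow_range_tilted h0 hc 0) 0).trans_eq (by simp [hcons, h0]))
    (le_ciInf fun t => sub_nonneg.2 (hc t))

theorem tiltedMarginal_le (hf : ConvexOn ℝ univ f) (h0 : f 0 = 0)
    (hc : ∀ t, c * t ≤ f (Fin.cons t 0)) (y : Fin (n + 1) → ℝ) :
    tiltedMarginal f c (Fin.tail y) ≤ f y - c * y 0 := by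
  simpa [tiltedMarginal] using ciInf_le (hf.bddBelow_range_tilted h0 hc (Fin.tail y)) (y 0)

protected theorem tiltedMarginal (hf : ConvexOn ℝ univ f) (h0 : f 0 = 0)
    (hc : ∀ t, c * t ≤ f (Fin.cons t 0)) : ConvexOn ℝ univ (tiltedMarginal f c) :=
  (hf.comp_finCons.sub ((c • LinearMap.fst ℝ ℝ (Fin n → ℝ)).concaveOn convex_univ)).ciInf_prod
    (hf.bddBelow_range_tilted h0 hc)

end ConvexOn

theorem LowerSemiAnalytic.tiltedMarginal {X : Type*} [TopologicalSpace X] [PolishSpace X]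
    [MeasurableSpace X] [BorelSpace X] {g : X → (Fin (n + 1) → ℝ) → ℝ}
    (hg : LowerSemiAnalytic (Function.uncurry g)) (hconv : ∀ x, ConvexOn ℝ univ (g x))
    (h0 : ∀ x, g x 0 = 0) {c : X → ℝ} (hcm : Measurable c)
    (hc : ∀ x t, c x * t ≤ g x (Fin.cons t 0)) :
    LowerSemiAnalytic (Function.uncurry fun x => tiltedMarginal (g x) (c x)) := by
  refine LowerSemiAnalytic.ciInf_of_continuous
    (f := fun t (z : X × (Fin n → ℝ)) => g z.1 (Fin.cons t z.2) - c z.1 * t) (fun t => ?_)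
    (fun z => ?_) (fun z => (hconv z.1).bddBelow_range_tilted (h0 z.1) (hc z.1) z.2)
  · exact (hg.comp_continuous (continuous_fst.prodMk (continuous_const.finCons continuous_snd)))
      |>.sub_measurable ((hcm.comp measurable_fst).mul_const t)
  · exact ((((hconv z.1).continuousOn isOpen_univ).comp_continuous
      (continuous_id.finCons continuous_const) fun _ => mem_univ _)).sub
      (continuous_const.mul continuous_id)

end TiltedMarginal

theorem exists_measurable_dotProduct_le {X : Type*} [TopologicalSpace X] [PolishSpace X]
    [MeasurableSpace X] [BorelSpace X] {n : ℕ} {g : X → (Fin n → ℝ) → ℝ}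
    (hg : LowerSemiAnalytic (Function.uncurry g)) (hconv : ∀ x, ConvexOn ℝ univ (g x))
    (h0 : ∀ x, g x 0 = 0) : ∃ p : X → Fin n → ℝ, Measurable p ∧ ∀ x y, p x ⬝ᵥ y ≤ g x y := by
  induction n with
  | zero => exact ⟨0, measurable_const, fun x y => by simp [Subsingleton.elim y 0, ← h0 x]⟩
  | succ n ih =>
    have hline : ∀ x, ConvexOn ℝ univ fun t => g x (Fin.cons t 0) := fun x =>
      ((hconv x).comp_finCons.comp_linearMap (LinearMap.inl ℝ ℝ (Fin n → ℝ))).subset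
        (subset_univ _) convex_univ
    have hcons : (Fin.cons 0 0 : Fin (n + 1) → ℝ) = 0 := Matrix.cons_zero_zero
    obtain ⟨c, hcm, hc⟩ := exists_measurable_mul_le_of_convexOn
      (φ := fun x t => g x (Fin.cons t 0))
      (fun t => hg.comp_continuous (continuous_id.prodMk continuous_const)) hline
      (fun x => by rw [hcons, h0])
    obtain ⟨p, hpm, hp⟩ := ih (hg.tiltedMarginal hconv h0 hcm hc)
      (fun x => (hconv x).tiltedMarginal (h0 x) (hc x))
      (fun x => (hconv x).tiltedMarginal_zero (h0 x) (hc x))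
    have hcpm : Measurable fun x => (Fin.cons (c x) (p x) : Fin (n + 1) → ℝ) :=
      Measurable.comp (g := fun a : ℝ × (Fin n → ℝ) => (Fin.cons a.1 a.2 : Fin (n + 1) → ℝ))
        (continuous_fst.finCons continuous_snd).measurable (hcm.prodMk hpm)
    refine ⟨fun x => Fin.cons (c x) (p x), hcpm, fun x y => ?_⟩
    calc Fin.cons (c x) (p x) ⬝ᵥ y = c x * y 0 + p x ⬝ᵥ Fin.tail y :=
          Matrix.cons_dotProduct _ _ _
      _ ≤ c x * y 0 + tiltedMarginal (g x) (c x) (Fin.tail y) := by gcongr; exact hp x _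
      _ ≤ g x y := by linarith [(hconv x).tiltedMarginal_le (h0 x) (hc x) y]

theorem borel_subgradient_selection_general {X : Type*} [TopologicalSpace X] [PolishSpace X]
    [MeasurableSpace X] [BorelSpace X]
    {n : ℕ} (g : X → (Fin n → ℝ) → ℝ)
    (hlsa : ∀ γ : ℝ, AnalyticSet {p : X × (Fin n → ℝ) | g p.1 p.2 < γ})
    (hconv : ∀ x, ConvexOn ℝ Set.univ (g x))
    (hzero : ∀ x, g x 0 = 0) :
    ∃ p : X → Fin n → ℝ, Measurable p ∧
      ∀ x y, (∑ i, p x i * y i) ≤ g x y :=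
  exists_measurable_dotProduct_le hlsa hconv hzero

/-- Borel subgradient selection for a lower semi-analytic family of convex
functions vanishing at the origin with nonempty subdifferential at 0. -/
theorem borel_subgradient_selection {X : Type*} [TopologicalSpace X] [PolishSpace X]
    [MeasurableSpace X] [BorelSpace X]
    {n : ℕ} (g : X → (Fin n → ℝ) → ℝ)
    (hlsa : ∀ γ : ℝ, AnalyticSet {p : X × (Fin n → ℝ) | g p.1 p.2 < γ})
    (hconv : ∀ x, ConvexOn ℝ Set.univ (g x))
    (hzero : ∀ x, g x 0 = 0)
    (hsub : ∀ x, ∃ p : Fin n → ℝ, ∀ y, (∑ i, p i * y i) ≤ g x y) :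
    ∃ p : X → Fin n → ℝ, Measurable p ∧
      ∀ x y, (∑ i, p x i * y i) ≤ g x y :=
  borel_subgradient_selection_general g hlsa hconv hzero
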